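/- For all integers n ≥ 1 and r ≥ 2, the infima of I' over the n-chotomic quantum correlations satisfy q_{n,r−1} ≤ 11·q_{n,r}. -/

import Mathlib

open Matrix Kronecker BigOperators
open scoped ComplexOrder

noncomputable section

/-- A bipartite correlation with two settings per party (`μ ν : Fin 2`, where index
`0` is setting 1 and index `1` is setting 2) and `r` outcomes per setting
(`k ℓ : Fin r`, where index `i` is outcome `i+1`): all probabilities are
nonnegative and, for each pair of settings, they sum to one. -/
def IsCorrelation (r : ℕ) (P : Fin 2 → Fin 2 → Fin r → Fin r → ℝ) : Prop :=
  (∀ μ ν k ℓ, 0 ≤ P μ ν k ℓ) ∧ (∀ μ ν, ∑ k, ∑ ℓ, P μ ν k ℓ = 1)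

/-- The Zohren–Gill expression
`I'(P) = P₂₂(k<ℓ) + P₁₂(k>ℓ) + P₁₁(k<ℓ) + P₂₁(k≥ℓ)`. -/
def ZG {r : ℕ} (P : Fin 2 → Fin 2 → Fin r → Fin r → ℝ) : ℝ :=
    (∑ k, ∑ ℓ, if k < ℓ then P 1 1 k ℓ else 0)
  + (∑ k, ∑ ℓ, if ℓ < k then P 0 1 k ℓ else 0)
  + (∑ k, ∑ ℓ, if k < ℓ then P 0 0 k ℓ else 0)
  + (∑ k, ∑ ℓ, if ℓ ≤ k then P 1 0 k ℓ else 0)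

/-- `P ∈ 𝒫₂[n,r]`: `P` is an `n`-chotomic quantum correlation with two settings per
party and `r` outcomes per setting.  There are a finite index set `Fin a`,
dimensions `dA, dB ≥ 1`, positive semidefinite states `η α` on the tensor product
space with total trace one, and for each setting positive semidefinite local
measurement operators summing to the identity with at most `n` nonzero members
for each `α`, reproducing `P` via the Born rule. -/
def IsNChotomicQC (n r : ℕ) (P : Fin 2 → Fin 2 → Fin r → Fin r → ℝ) : Prop :=
  IsCorrelation r P ∧
  ∃ (a dA dB : ℕ), 1 ≤ dA ∧ 1 ≤ dB ∧
  ∃ (η : Fin a → Matrix (Fin dA × Fin dB) (Fin dA × Fin dB) ℂ)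
    (DA : Fin 2 → Fin a → Fin r → Matrix (Fin dA) (Fin dA) ℂ)
    (DB : Fin 2 → Fin a → Fin r → Matrix (Fin dB) (Fin dB) ℂ),
    (∀ α, (η α).PosSemidef) ∧ (∑ α, (η α).trace) = 1 ∧
    (∀ μ α k, (DA μ α k).PosSemidef) ∧ (∀ μ α, ∑ k, DA μ α k = 1) ∧
    (∀ μ α, {k | DA μ α k ≠ 0}.ncard ≤ n) ∧
    (∀ ν α k, (DB ν α k).PosSemidef) ∧ (∀ ν α, ∑ k, DB ν α k = 1) ∧
    (∀ ν α, {k | DB ν α k ≠ 0}.ncard ≤ n) ∧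
    (∀ μ ν k ℓ, (P μ ν k ℓ : ℂ) = ∑ α, (η α * (DA μ α k ⊗ₖ DB ν α ℓ)).trace)

/-- `q_{n,r} = inf { I'(P) : P ∈ 𝒫₂[n,r] }`. -/
def qnr (n r : ℕ) : ℝ := sInf {x | ∃ P, IsNChotomicQC n r P ∧ ZG P = x}

/-- `q_n = inf { q_{n,r} : r ≥ n }`. -/
def qn (n : ℕ) : ℝ := sInf {x | ∃ r, n ≤ r ∧ qnr n r = x}

/-- The no-signaling condition for a bipartite correlation. -/
def NoSignaling (r : ℕ) (P : Fin 2 → Fin 2 → Fin r → Fin r → ℝ) : Prop :=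
  (∀ μ k, ∑ ℓ, P μ 0 k ℓ = ∑ ℓ, P μ 1 k ℓ) ∧
  (∀ ν ℓ, ∑ k, P 0 ν k ℓ = ∑ k, P 1 ν k ℓ)

/-- Merging the last outcome (outcome `r+1`, index `Fin.last r`) with the first
outcome (index `0`) on both parties, turning a correlation with `r+1` outcomes
into one with `r` outcomes. -/
def mergeLast {r : ℕ} (P : Fin 2 → Fin 2 → Fin (r+1) → Fin (r+1) → ℝ) :
    Fin 2 → Fin 2 → Fin r → Fin r → ℝ :=
  fun μ ν k ℓ =>
    P μ ν k.castSucc ℓ.castSucc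
    + (if (k : ℕ) = 0 then P μ ν (Fin.last r) ℓ.castSucc else 0)
    + (if (ℓ : ℕ) = 0 then P μ ν k.castSucc (Fin.last r) else 0)
    + (if (k : ℕ) = 0 ∧ (ℓ : ℕ) = 0 then P μ ν (Fin.last r) (Fin.last r) else 0)

lemma kronecker_sum_right {ι : Type*} (s : Finset ι) {da db : ℕ}
    (A : Matrix (Fin da) (Fin da) ℂ) (B : ι → Matrix (Fin db) (Fin db) ℂ) :
    A ⊗ₖ (∑ i ∈ s, B i) = ∑ i ∈ s, A ⊗ₖ B i := by
  ext ⟨i, j⟩ ⟨i', j'⟩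
  simp [Matrix.kroneckerMap_apply, Finset.mul_sum, Matrix.sum_apply]

lemma kronecker_sum_left {ι : Type*} (s : Finset ι) {da db : ℕ}
    (A : ι → Matrix (Fin da) (Fin da) ℂ) (B : Matrix (Fin db) (Fin db) ℂ) :
    (∑ i ∈ s, A i) ⊗ₖ B = ∑ i ∈ s, A i ⊗ₖ B := by
  ext ⟨i, j⟩ ⟨i', j'⟩
  simp [Matrix.kroneckerMap_apply, Finset.sum_mul, Matrix.sum_apply]

lemma noSignaling_of_QC {n r : ℕ} {P : Fin 2 → Fin 2 → Fin r → Fin r → ℝ}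
    (h : IsNChotomicQC n r P) : NoSignaling r P := by
  obtain ⟨-, a, dA, dB, -, -, η, DA, DB, -, -, -, hDAsum, -, -, hDBsum, -, hBorn⟩ := h
  constructor
  · intro μ k
    rw [← Complex.ofReal_inj]
    have key : ∀ ν, ((∑ ℓ, P μ ν k ℓ : ℝ) : ℂ)
        = ∑ α, (η α * (DA μ α k ⊗ₖ (1 : Matrix (Fin dB) (Fin dB) ℂ))).trace := by
      intro ν
      push_cast
      simp only [hBorn]
      rw [Finset.sum_comm]
      refine Finset.sum_congr rfl fun α _ => ?_
      rw [← Matrix.trace_sum, ← Matrix.mul_sum, ← kronecker_sum_right, hDBsum]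
    rw [key 0, key 1]
  · intro ν ℓ
    rw [← Complex.ofReal_inj]
    have key : ∀ μ, ((∑ k, P μ ν k ℓ : ℝ) : ℂ)
        = ∑ α, (η α * ((1 : Matrix (Fin dA) (Fin dA) ℂ) ⊗ₖ DB ν α ℓ)).trace := by
      intro μ
      push_cast
      simp only [hBorn]
      rw [Finset.sum_comm]
      refine Finset.sum_congr rfl fun α _ => ?_
      rw [← Matrix.trace_sum, ← Matrix.mul_sum, ← kronecker_sum_left, hDAsum]
    rw [key 0, key 1]

lemma sum_ite_val_zero {M : Type*} [AddCommMonoid M] {m : ℕ} (f : Fin (m+1) → M) :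
    ∑ k : Fin (m+1), (if (k : ℕ) = 0 then f k else 0) = f 0 := by
  rw [Finset.sum_eq_single 0]
  · simp
  · intro b _ hb
    rw [if_neg]
    intro h; exact hb (Fin.ext (by simp [h]))
  · simp

lemma merge_card_le {d m : ℕ} (D : Fin (m+2) → Matrix (Fin d) (Fin d) ℂ) :
    {k : Fin (m+1) | D k.castSucc + (if (k : ℕ) = 0 then D (Fin.last (m+1)) else 0) ≠ 0}.ncard
      ≤ {k : Fin (m+2) | D k ≠ 0}.ncard := by
  by_cases h0 : D (Fin.last (m+1)) = 0
  · refine Set.ncard_le_ncard_of_injOn Fin.castSucc ?_ ?_ (Set.toFinite _)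
    · intro k hk
      simp only [Set.mem_setOf_eq, h0] at hk ⊢
      intro hc
      apply hk
      split <;> simp [hc]
    · exact fun x _ y _ hxy => Fin.castSucc_injective _ hxy
  · refine Set.ncard_le_ncard_of_injOn
      (fun k => if (k : ℕ) = 0 then Fin.last (m+1) else Fin.castSucc k) ?_ ?_ (Set.toFinite _)
    · intro k hk
      by_cases hk0 : (k : ℕ) = 0
      · simpa [hk0] using h0
      · simp only [Set.mem_setOf_eq, hk0, if_false] at hk ⊢
        intro hc
        apply hk
        simp [hc, hk0]
    · intro x _ y _ hxy
      by_cases hx : (x : ℕ) = 0 <;> by_cases hy : (y : ℕ) = 0 <;>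
        simp only [hx, hy, if_true, if_false] at hxy
      · exact Fin.ext (hx.trans hy.symm)
      · exact absurd hxy.symm (Fin.castSucc_lt_last y).ne
      · exact absurd hxy (Fin.castSucc_lt_last x).ne
      · exact Fin.castSucc_injective _ hxy

lemma merge_isNChotomicQC {n m : ℕ} {P : Fin 2 → Fin 2 → Fin (m+2) → Fin (m+2) → ℝ}
    (h : IsNChotomicQC n (m+2) P) : IsNChotomicQC n (m+1) (mergeLast P) := by
  obtain ⟨⟨hpos, hsum⟩, a, dA, dB, hdA, hdB, η, DA, DB, hη, hηtr, hDApsd, hDAsum, hDAcard,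
    hDBpsd, hDBsum, hDBcard, hBorn⟩ := h
  refine ⟨⟨?_, ?_⟩, a, dA, dB, hdA, hdB, η,
    (fun μ α k => DA μ α k.castSucc + (if (k : ℕ) = 0 then DA μ α (Fin.last (m+1)) else 0)),
    (fun ν α ℓ => DB ν α ℓ.castSucc + (if (ℓ : ℕ) = 0 then DB ν α (Fin.last (m+1)) else 0)),
    hη, hηtr, ?_, ?_, ?_, ?_, ?_, ?_, ?_⟩
  · -- nonneg
    intro μ ν k ℓ
    unfold mergeLast
    refine add_nonneg (add_nonneg (add_nonneg (hpos _ _ _ _) ?_) ?_) ?_ <;>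
      · split
        · exact hpos _ _ _ _
        · exact le_rfl
  · -- sums to one
    intro μ ν
    have inner : ∀ k : Fin (m+1), ∑ ℓ : Fin (m+1), mergeLast P μ ν k ℓ
        = ((∑ ℓ : Fin (m+1), P μ ν k.castSucc ℓ.castSucc) + P μ ν k.castSucc (Fin.last (m+1)))
          + (if (k : ℕ) = 0 then
              ((∑ ℓ : Fin (m+1), P μ ν (Fin.last (m+1)) ℓ.castSucc)
                + P μ ν (Fin.last (m+1)) (Fin.last (m+1))) else 0) := by
      intro k
      unfold mergeLast
      by_cases hk : (k : ℕ) = 0 <;>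
        simp only [hk, if_true, if_false, true_and, false_and, Finset.sum_add_distrib, Finset.sum_const_zero,
          sum_ite_val_zero] <;> ring
    calc ∑ k : Fin (m+1), ∑ ℓ : Fin (m+1), mergeLast P μ ν k ℓ
        = (∑ k : Fin (m+1), ((∑ ℓ : Fin (m+1), P μ ν k.castSucc ℓ.castSucc)
            + P μ ν k.castSucc (Fin.last (m+1))))
          + ((∑ ℓ : Fin (m+1), P μ ν (Fin.last (m+1)) ℓ.castSucc)
            + P μ ν (Fin.last (m+1)) (Fin.last (m+1))) := by
          rw [Finset.sum_congr rfl (fun k _ => inner k), Finset.sum_add_distrib,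
            sum_ite_val_zero]
      _ = ∑ k : Fin (m+2), ∑ ℓ : Fin (m+2), P μ ν k ℓ := by
          rw [Fin.sum_univ_castSucc (f := fun k => ∑ ℓ : Fin (m+2), P μ ν k ℓ)]
          congr 1
          · exact Finset.sum_congr rfl fun k _ => (Fin.sum_univ_castSucc _).symm
          · exact (Fin.sum_univ_castSucc _).symm
      _ = 1 := hsum μ ν
  · -- DA' psd
    intro μ α k
    refine (hDApsd μ α k.castSucc).add ?_
    split
    · exact hDApsd μ α _
    · exact Matrix.PosSemidef.zero
  · -- DA' sum
    intro μ α
    rw [Finset.sum_add_distrib, sum_ite_val_zero,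
      ← Fin.sum_univ_castSucc (f := fun k => DA μ α k)]
    exact hDAsum μ α
  · -- DA' card
    intro μ α
    exact le_trans (merge_card_le (DA μ α)) (hDAcard μ α)
  · -- DB' psd
    intro ν α ℓ
    refine (hDBpsd ν α ℓ.castSucc).add ?_
    split
    · exact hDBpsd ν α _
    · exact Matrix.PosSemidef.zero
  · -- DB' sum
    intro ν α
    rw [Finset.sum_add_distrib, sum_ite_val_zero,
      ← Fin.sum_univ_castSucc (f := fun ℓ => DB ν α ℓ)]
    exact hDBsum ν α
  · -- DB' card
    intro ν α
    exact le_trans (merge_card_le (DB ν α)) (hDBcard ν α)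
  · -- Born rule
    intro μ ν k ℓ
    by_cases hk : (k : ℕ) = 0 <;> by_cases hl : (ℓ : ℕ) = 0 <;>
      simp only [mergeLast, hk, hl, if_true, if_false, and_self, and_false, false_and,
        and_true, true_and] <;>
      simp only [Matrix.add_kronecker, Matrix.kronecker_add, Matrix.zero_kronecker,
        Matrix.kronecker_zero, add_zero, mul_add, Matrix.trace_add, Finset.sum_add_distrib,
        ← hBorn] <;>
      push_cast <;> ring

lemma sum_ite_const {M : Type*} [AddCommMonoid M] {ι : Type*} [Fintype ι]
    (c : Prop) [Decidable c] (f : ι → M) :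
    ∑ i : ι, (if c then f i else 0) = if c then ∑ i : ι, f i else 0 := by
  split <;> simp

lemma merge_pointwise_lt {m : ℕ} (x y z w : ℝ) (k ℓ : Fin (m+1)) :
    (if k < ℓ then (x + (if (k:ℕ) = 0 then y else 0) + (if (ℓ:ℕ) = 0 then z else 0)
      + (if (k:ℕ) = 0 ∧ (ℓ:ℕ) = 0 then w else 0)) else 0)
    = (if k < ℓ then x else 0)
      + (if (k:ℕ) = 0 then (if k < ℓ then y else 0) else 0) := by
  by_cases h1 : k < ℓ
  · have h3 : ¬(ℓ:ℕ) = 0 := by have := Fin.lt_def.mp h1; omega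
    simp [h1, h3]
  · simp [h1]

lemma merge_pointwise_gt {m : ℕ} (x y z w : ℝ) (k ℓ : Fin (m+1)) :
    (if ℓ < k then (x + (if (k:ℕ) = 0 then y else 0) + (if (ℓ:ℕ) = 0 then z else 0)
      + (if (k:ℕ) = 0 ∧ (ℓ:ℕ) = 0 then w else 0)) else 0)
    = (if ℓ < k then x else 0)
      + (if (ℓ:ℕ) = 0 then (if ℓ < k then z else 0) else 0) := by
  by_cases h1 : ℓ < k
  · have h2 : ¬(k:ℕ) = 0 := by have := Fin.lt_def.mp h1; omega
    simp [h1, h2]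
  · simp [h1]

lemma merge_pointwise_le {m : ℕ} (x y z w : ℝ) (k ℓ : Fin (m+1)) :
    (if ℓ ≤ k then (x + (if (k:ℕ) = 0 then y else 0) + (if (ℓ:ℕ) = 0 then z else 0)
      + (if (k:ℕ) = 0 ∧ (ℓ:ℕ) = 0 then w else 0)) else 0)
    = (if ℓ ≤ k then x else 0)
      + (if (k:ℕ) = 0 then (if (ℓ:ℕ) = 0 then y else 0) else 0)
      + (if (ℓ:ℕ) = 0 then z else 0)
      + (if (k:ℕ) = 0 then (if (ℓ:ℕ) = 0 then w else 0) else 0) := by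
  by_cases h1 : ℓ ≤ k
  · by_cases h2 : (k:ℕ) = 0
    · have h3 : (ℓ:ℕ) = 0 := by have := Fin.le_def.mp h1; omega
      simp [h1, h2, h3]
    · simp [h1, h2]
  · have h3 : ¬(ℓ:ℕ) = 0 := by
      intro h
      exact h1 (Fin.le_def.mpr (by omega))
    simp [h1, h3]

lemma comp_lt {m : ℕ} (P : Fin 2 → Fin 2 → Fin (m+2) → Fin (m+2) → ℝ) (μ ν : Fin 2) :
    ∑ k : Fin (m+1), ∑ ℓ : Fin (m+1), (if k < ℓ then mergeLast P μ ν k ℓ else 0)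
    = (∑ k : Fin (m+1), ∑ ℓ : Fin (m+1),
        (if k < ℓ then P μ ν k.castSucc ℓ.castSucc else 0))
      + ∑ ℓ : Fin (m+1), (if (0:Fin (m+1)) < ℓ then P μ ν (Fin.last (m+1)) ℓ.castSucc else 0) := by
  simp only [mergeLast, merge_pointwise_lt, Finset.sum_add_distrib, sum_ite_const,
    sum_ite_val_zero]

lemma comp_gt {m : ℕ} (P : Fin 2 → Fin 2 → Fin (m+2) → Fin (m+2) → ℝ) (μ ν : Fin 2) :
    ∑ k : Fin (m+1), ∑ ℓ : Fin (m+1), (if ℓ < k then mergeLast P μ ν k ℓ else 0)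
    = (∑ k : Fin (m+1), ∑ ℓ : Fin (m+1),
        (if ℓ < k then P μ ν k.castSucc ℓ.castSucc else 0))
      + ∑ k : Fin (m+1), (if (0:Fin (m+1)) < k then P μ ν k.castSucc (Fin.last (m+1)) else 0) := by
  simp only [mergeLast, merge_pointwise_gt, Finset.sum_add_distrib, sum_ite_const,
    sum_ite_val_zero]

lemma comp_le {m : ℕ} (P : Fin 2 → Fin 2 → Fin (m+2) → Fin (m+2) → ℝ) (μ ν : Fin 2) :
    ∑ k : Fin (m+1), ∑ ℓ : Fin (m+1), (if ℓ ≤ k then mergeLast P μ ν k ℓ else 0)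
    = (∑ k : Fin (m+1), ∑ ℓ : Fin (m+1),
        (if ℓ ≤ k then P μ ν k.castSucc ℓ.castSucc else 0))
      + P μ ν (Fin.last (m+1)) ((0:Fin (m+1)).castSucc)
      + (∑ k : Fin (m+1), P μ ν k.castSucc (Fin.last (m+1)))
      + P μ ν (Fin.last (m+1)) (Fin.last (m+1)) := by
  simp only [mergeLast, merge_pointwise_le, Finset.sum_add_distrib, sum_ite_const,
    sum_ite_val_zero]

lemma expand_lt {m : ℕ} (f : Fin (m+2) → Fin (m+2) → ℝ) :
    ∑ k : Fin (m+2), ∑ ℓ : Fin (m+2), (if k < ℓ then f k ℓ else 0)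
    = (∑ k : Fin (m+1), ∑ ℓ : Fin (m+1), (if k < ℓ then f k.castSucc ℓ.castSucc else 0))
      + ∑ k : Fin (m+1), f k.castSucc (Fin.last (m+1)) := by
  rw [Fin.sum_univ_castSucc (f := fun k => ∑ ℓ : Fin (m+2), if k < ℓ then f k ℓ else 0)]
  have h1 : ∑ ℓ : Fin (m+2), (if Fin.last (m+1) < ℓ then f (Fin.last (m+1)) ℓ else 0) = 0 :=
    Finset.sum_eq_zero fun ℓ _ => if_neg (not_lt.mpr (Fin.le_last ℓ))
  rw [h1, add_zero, ← Finset.sum_add_distrib]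
  refine Finset.sum_congr rfl fun k _ => ?_
  rw [Fin.sum_univ_castSucc (f := fun ℓ => if k.castSucc < ℓ then f k.castSucc ℓ else 0),
    if_pos (Fin.castSucc_lt_last k)]
  simp only [Fin.castSucc_lt_castSucc_iff]

lemma expand_gt {m : ℕ} (f : Fin (m+2) → Fin (m+2) → ℝ) :
    ∑ k : Fin (m+2), ∑ ℓ : Fin (m+2), (if ℓ < k then f k ℓ else 0)
    = (∑ k : Fin (m+1), ∑ ℓ : Fin (m+1), (if ℓ < k then f k.castSucc ℓ.castSucc else 0))
      + ∑ ℓ : Fin (m+1), f (Fin.last (m+1)) ℓ.castSucc := by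
  rw [Fin.sum_univ_castSucc (f := fun k => ∑ ℓ : Fin (m+2), if ℓ < k then f k ℓ else 0)]
  have h1 : ∑ ℓ : Fin (m+2), (if ℓ < Fin.last (m+1) then f (Fin.last (m+1)) ℓ else 0)
      = ∑ ℓ : Fin (m+1), f (Fin.last (m+1)) ℓ.castSucc := by
    rw [Fin.sum_univ_castSucc
      (f := fun ℓ => if ℓ < Fin.last (m+1) then f (Fin.last (m+1)) ℓ else 0),
      if_neg (lt_irrefl _), add_zero]
    exact Finset.sum_congr rfl fun ℓ _ => if_pos (Fin.castSucc_lt_last ℓ)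
  rw [h1]
  congr 1
  refine Finset.sum_congr rfl fun k _ => ?_
  rw [Fin.sum_univ_castSucc (f := fun ℓ => if ℓ < k.castSucc then f k.castSucc ℓ else 0),
    if_neg (not_lt.mpr (Fin.castSucc_lt_last k).le), add_zero]
  simp only [Fin.castSucc_lt_castSucc_iff]

lemma expand_le {m : ℕ} (f : Fin (m+2) → Fin (m+2) → ℝ) :
    ∑ k : Fin (m+2), ∑ ℓ : Fin (m+2), (if ℓ ≤ k then f k ℓ else 0)
    = (∑ k : Fin (m+1), ∑ ℓ : Fin (m+1), (if ℓ ≤ k then f k.castSucc ℓ.castSucc else 0))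
      + ((∑ ℓ : Fin (m+1), f (Fin.last (m+1)) ℓ.castSucc)
        + f (Fin.last (m+1)) (Fin.last (m+1))) := by
  rw [Fin.sum_univ_castSucc (f := fun k => ∑ ℓ : Fin (m+2), if ℓ ≤ k then f k ℓ else 0)]
  have h1 : ∑ ℓ : Fin (m+2), (if ℓ ≤ Fin.last (m+1) then f (Fin.last (m+1)) ℓ else 0)
      = (∑ ℓ : Fin (m+1), f (Fin.last (m+1)) ℓ.castSucc) + f (Fin.last (m+1)) (Fin.last (m+1)) := by
    rw [Fin.sum_univ_castSucc
      (f := fun ℓ => if ℓ ≤ Fin.last (m+1) then f (Fin.last (m+1)) ℓ else 0),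
      if_pos le_rfl]
    congr 1
    exact Finset.sum_congr rfl fun ℓ _ => if_pos (Fin.le_last _)
  rw [h1]
  congr 1
  refine Finset.sum_congr rfl fun k _ => ?_
  rw [Fin.sum_univ_castSucc (f := fun ℓ => if ℓ ≤ k.castSucc then f k.castSucc ℓ else 0),
    if_neg (not_le.mpr (Fin.castSucc_lt_last k)), add_zero]
  simp only [Fin.castSucc_le_castSucc_iff]

lemma ite_nonneg' {c : Prop} [Decidable c] {x : ℝ} (hx : 0 ≤ x) :
    0 ≤ (if c then x else 0) := by
  split
  · exact hx
  · exact le_rfl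

lemma ite_le_self {c : Prop} [Decidable c] {x : ℝ} (hx : 0 ≤ x) :
    (if c then x else 0) ≤ x := by
  split
  · exact le_rfl
  · exact hx

lemma zg_merge_le {m : ℕ} {P : Fin 2 → Fin 2 → Fin (m+2) → Fin (m+2) → ℝ}
    (hpos : ∀ μ ν k ℓ, 0 ≤ P μ ν k ℓ) (hns : NoSignaling (m+2) P) :
    ZG (mergeLast P) ≤ 11 * ZG P := by
  have hZGQ : ZG (mergeLast P)
      = ((∑ k : Fin (m+1), ∑ ℓ : Fin (m+1), (if k < ℓ then P 1 1 k.castSucc ℓ.castSucc else 0)) + (∑ ℓ : Fin (m+1), (if (0:Fin (m+1)) < ℓ then P 1 1 (Fin.last (m+1)) ℓ.castSucc else 0))) + ((∑ k : Fin (m+1), ∑ ℓ : Fin (m+1), (if ℓ < k then P 0 1 k.castSucc ℓ.castSucc else 0)) + (∑ k : Fin (m+1), (if (0:Fin (m+1)) < k then P 0 1 k.castSucc (Fin.last (m+1)) else 0))) + ((∑ k : Fin (m+1), ∑ ℓ : Fin (m+1), (if k < ℓ then P 0 0 k.castSucc ℓ.castSucc else 0)) + (∑ ℓ : Fin (m+1),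 (if (0:Fin (m+1)) < ℓ then P 0 0 (Fin.last (m+1)) ℓ.castSucc else 0)))
        + ((∑ k : Fin (m+1), ∑ ℓ : Fin (m+1), (if ℓ ≤ k then P 1 0 k.castSucc ℓ.castSucc else 0)) + P 1 0 (Fin.last (m+1)) ((0:Fin (m+1)).castSucc) + (∑ k : Fin (m+1), P 1 0 k.castSucc (Fin.last (m+1))) + P 1 0 (Fin.last (m+1)) (Fin.last (m+1))) := by
    unfold ZG
    rw [comp_lt P 1 1, comp_gt P 0 1, comp_lt P 0 0, comp_le P 1 0]
  have hZGP : ZG P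
      = ((∑ k : Fin (m+1), ∑ ℓ : Fin (m+1), (if k < ℓ then P 1 1 k.castSucc ℓ.castSucc else 0)) + (∑ k : Fin (m+1), P 1 1 k.castSucc (Fin.last (m+1)))) + ((∑ k : Fin (m+1), ∑ ℓ : Fin (m+1), (if ℓ < k then P 0 1 k.castSucc ℓ.castSucc else 0)) + (∑ ℓ : Fin (m+1), P 0 1 (Fin.last (m+1)) ℓ.castSucc)) + ((∑ k : Fin (m+1), ∑ ℓ : Fin (m+1), (if k < ℓ then P 0 0 k.castSucc ℓ.castSucc else 0)) + (∑ k : Fin (m+1), P 0 0 k.castSucc (Fin.last (m+1))))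
        + ((∑ k : Fin (m+1), ∑ ℓ : Fin (m+1), (if ℓ ≤ k then P 1 0 k.castSucc ℓ.castSucc else 0)) + ((∑ ℓ : Fin (m+1), P 1 0 (Fin.last (m+1)) ℓ.castSucc) + P 1 0 (Fin.last (m+1)) (Fin.last (m+1)))) := by
    unfold ZG
    rw [expand_lt (P 1 1), expand_gt (P 0 1), expand_lt (P 0 0), expand_le (P 1 0)]
  have nnSA : (0:ℝ) ≤ (∑ k : Fin (m+1), ∑ ℓ : Fin (m+1), (if k < ℓ then P 1 1 k.castSucc ℓ.castSucc else 0)) :=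
    Finset.sum_nonneg fun k _ => Finset.sum_nonneg fun ℓ _ => ite_nonneg' (hpos _ _ _ _)
  have nnSB : (0:ℝ) ≤ (∑ k : Fin (m+1), ∑ ℓ : Fin (m+1), (if ℓ < k then P 0 1 k.castSucc ℓ.castSucc else 0)) :=
    Finset.sum_nonneg fun k _ => Finset.sum_nonneg fun ℓ _ => ite_nonneg' (hpos _ _ _ _)
  have nnSC : (0:ℝ) ≤ (∑ k : Fin (m+1), ∑ ℓ : Fin (m+1), (if k < ℓ then P 0 0 k.castSucc ℓ.castSucc else 0)) :=
    Finset.sum_nonneg fun k _ => Finset.sum_nonneg fun ℓ _ => ite_nonneg' (hpos _ _ _ _)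
  have nnSD : (0:ℝ) ≤ (∑ k : Fin (m+1), ∑ ℓ : Fin (m+1), (if ℓ ≤ k then P 1 0 k.castSucc ℓ.castSucc else 0)) :=
    Finset.sum_nonneg fun k _ => Finset.sum_nonneg fun ℓ _ => ite_nonneg' (hpos _ _ _ _)
  have nncolA : (0:ℝ) ≤ (∑ k : Fin (m+1), P 1 1 k.castSucc (Fin.last (m+1))) := Finset.sum_nonneg fun k _ => hpos _ _ _ _
  have nnrowB : (0:ℝ) ≤ (∑ ℓ : Fin (m+1), P 0 1 (Fin.last (m+1)) ℓ.castSucc) := Finset.sum_nonneg fun ℓ _ => hpos _ _ _ _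
  have nncolC : (0:ℝ) ≤ (∑ k : Fin (m+1), P 0 0 k.castSucc (Fin.last (m+1))) := Finset.sum_nonneg fun k _ => hpos _ _ _ _
  have nnrowD : (0:ℝ) ≤ (∑ ℓ : Fin (m+1), P 1 0 (Fin.last (m+1)) ℓ.castSucc) := Finset.sum_nonneg fun ℓ _ => hpos _ _ _ _
  have nnp11 : (0:ℝ) ≤ P 1 1 (Fin.last (m+1)) (Fin.last (m+1)) := hpos _ _ _ _
  have nnp01 : (0:ℝ) ≤ P 0 1 (Fin.last (m+1)) (Fin.last (m+1)) := hpos _ _ _ _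
  have nnp00 : (0:ℝ) ≤ P 0 0 (Fin.last (m+1)) (Fin.last (m+1)) := hpos _ _ _ _
  have nnp10 : (0:ℝ) ≤ P 1 0 (Fin.last (m+1)) (Fin.last (m+1)) := hpos _ _ _ _
  have hEA : (∑ ℓ : Fin (m+1), (if (0:Fin (m+1)) < ℓ then P 1 1 (Fin.last (m+1)) ℓ.castSucc else 0)) ≤ (∑ ℓ : Fin (m+1), P 1 1 (Fin.last (m+1)) ℓ.castSucc) := Finset.sum_le_sum fun ℓ _ => ite_le_self (hpos _ _ _ _)
  have hEB : (∑ k : Fin (m+1), (if (0:Fin (m+1)) < k then P 0 1 k.castSucc (Fin.last (m+1)) else 0)) ≤ (∑ k : Fin (m+1), P 0 1 k.castSucc (Fin.last (m+1))) := Finset.sum_le_sum fun k _ => ite_le_self (hpos _ _ _ _)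
  have hEC : (∑ ℓ : Fin (m+1), (if (0:Fin (m+1)) < ℓ then P 0 0 (Fin.last (m+1)) ℓ.castSucc else 0)) ≤ (∑ ℓ : Fin (m+1), P 0 0 (Fin.last (m+1)) ℓ.castSucc) := Finset.sum_le_sum fun ℓ _ => ite_le_self (hpos _ _ _ _)
  have eA : (∑ ℓ : Fin (m+2), P 1 1 (Fin.last (m+1)) ℓ) = (∑ ℓ : Fin (m+1), P 1 1 (Fin.last (m+1)) ℓ.castSucc) + P 1 1 (Fin.last (m+1)) (Fin.last (m+1)) := Fin.sum_univ_castSucc _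
  have eB : (∑ k : Fin (m+2), P 0 1 k (Fin.last (m+1))) = (∑ k : Fin (m+1), P 0 1 k.castSucc (Fin.last (m+1))) + P 0 1 (Fin.last (m+1)) (Fin.last (m+1)) := Fin.sum_univ_castSucc _
  have eC : (∑ ℓ : Fin (m+2), P 0 0 (Fin.last (m+1)) ℓ) = (∑ ℓ : Fin (m+1), P 0 0 (Fin.last (m+1)) ℓ.castSucc) + P 0 0 (Fin.last (m+1)) (Fin.last (m+1)) := Fin.sum_univ_castSucc _
  have eD : (∑ k : Fin (m+2), P 1 0 k (Fin.last (m+1))) = (∑ k : Fin (m+1), P 1 0 k.castSucc (Fin.last (m+1))) + P 1 0 (Fin.last (m+1)) (Fin.last (m+1)) := Fin.sum_univ_castSucc _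
  have eAc : (∑ k : Fin (m+2), P 1 1 k (Fin.last (m+1))) = (∑ k : Fin (m+1), P 1 1 k.castSucc (Fin.last (m+1))) + P 1 1 (Fin.last (m+1)) (Fin.last (m+1)) := Fin.sum_univ_castSucc _
  have eBr : (∑ ℓ : Fin (m+2), P 0 1 (Fin.last (m+1)) ℓ) = (∑ ℓ : Fin (m+1), P 0 1 (Fin.last (m+1)) ℓ.castSucc) + P 0 1 (Fin.last (m+1)) (Fin.last (m+1)) := Fin.sum_univ_castSucc _
  have eCc : (∑ k : Fin (m+2), P 0 0 k (Fin.last (m+1))) = (∑ k : Fin (m+1), P 0 0 k.castSucc (Fin.last (m+1))) + P 0 0 (Fin.last (m+1)) (Fin.last (m+1)) := Fin.sum_univ_castSucc _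
  have eDr : (∑ ℓ : Fin (m+2), P 1 0 (Fin.last (m+1)) ℓ) = (∑ ℓ : Fin (m+1), P 1 0 (Fin.last (m+1)) ℓ.castSucc) + P 1 0 (Fin.last (m+1)) (Fin.last (m+1)) := Fin.sum_univ_castSucc _
  have ns1 : (∑ ℓ : Fin (m+2), P 1 0 (Fin.last (m+1)) ℓ) = (∑ ℓ : Fin (m+2), P 1 1 (Fin.last (m+1)) ℓ) := hns.1 1 (Fin.last (m+1))
  have ns2 : (∑ ℓ : Fin (m+2), P 0 0 (Fin.last (m+1)) ℓ) = (∑ ℓ : Fin (m+2), P 0 1 (Fin.last (m+1)) ℓ) := hns.1 0 (Fin.last (m+1))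
  have ns3 : (∑ k : Fin (m+2), P 0 1 k (Fin.last (m+1))) = (∑ k : Fin (m+2), P 1 1 k (Fin.last (m+1))) := hns.2 1 (Fin.last (m+1))
  have ns4 : (∑ k : Fin (m+2), P 0 0 k (Fin.last (m+1))) = (∑ k : Fin (m+2), P 1 0 k (Fin.last (m+1))) := hns.2 0 (Fin.last (m+1))
  have sp11 : P 1 1 (Fin.last (m+1)) (Fin.last (m+1)) ≤ (∑ ℓ : Fin (m+2), P 1 1 (Fin.last (m+1)) ℓ) :=
    Finset.single_le_sum (fun ℓ _ => hpos 1 1 _ ℓ) (Finset.mem_univ (Fin.last (m+1)))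
  have sp01 : P 0 1 (Fin.last (m+1)) (Fin.last (m+1)) ≤ (∑ k : Fin (m+2), P 0 1 k (Fin.last (m+1))) :=
    Finset.single_le_sum (fun k _ => hpos 0 1 k _) (Finset.mem_univ (Fin.last (m+1)))
  have sp00 : P 0 0 (Fin.last (m+1)) (Fin.last (m+1)) ≤ (∑ ℓ : Fin (m+2), P 0 0 (Fin.last (m+1)) ℓ) :=
    Finset.single_le_sum (fun ℓ _ => hpos 0 0 _ ℓ) (Finset.mem_univ (Fin.last (m+1)))
  have spz : P 1 0 (Fin.last (m+1)) ((0:Fin (m+1)).castSucc) ≤ (∑ ℓ : Fin (m+1), P 1 0 (Fin.last (m+1)) ℓ.castSucc) :=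
    Finset.single_le_sum (fun ℓ _ => hpos 1 0 _ _) (Finset.mem_univ (0:Fin (m+1)))
  linarith

lemma zg_nonneg {r : ℕ} {P : Fin 2 → Fin 2 → Fin r → Fin r → ℝ}
    (hpos : ∀ μ ν k ℓ, 0 ≤ P μ ν k ℓ) : 0 ≤ ZG P := by
  unfold ZG
  have h : ∀ (μ ν : Fin 2) (c : Fin r → Fin r → Prop) (_ : ∀ k ℓ, Decidable (c k ℓ)),
      (0:ℝ) ≤ ∑ k, ∑ ℓ, if c k ℓ then P μ ν k ℓ else 0 := by
    intro μ ν c _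
    refine Finset.sum_nonneg fun k _ => Finset.sum_nonneg fun ℓ _ => ?_
    split
    · exact hpos _ _ _ _
    · exact le_rfl
  have h1 := h 1 1 (fun k ℓ => k < ℓ) (fun _ _ => inferInstance)
  have h2 := h 0 1 (fun k ℓ => ℓ < k) (fun _ _ => inferInstance)
  have h3 := h 0 0 (fun k ℓ => k < ℓ) (fun _ _ => inferInstance)
  have h4 := h 1 0 (fun k ℓ => ℓ ≤ k) (fun _ _ => inferInstance)
  linarith

lemma exists_QC (n : ℕ) (hn : 1 ≤ n) (r : ℕ) (hr : 1 ≤ r) :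
    ∃ P, IsNChotomicQC n r P := by
  obtain ⟨s, rfl⟩ : ∃ s, r = s + 1 := ⟨r - 1, by omega⟩
  refine ⟨fun μ ν k ℓ => if k = 0 ∧ ℓ = 0 then 1 else 0, ⟨⟨?_, ?_⟩, 1, 1, 1,
    le_rfl, le_rfl, (fun _ => 1), (fun _ _ k => if k = 0 then 1 else 0),
    (fun _ _ ℓ => if ℓ = 0 then 1 else 0), ?_, ?_, ?_, ?_, ?_, ?_, ?_, ?_, ?_⟩⟩
  · intro μ ν k ℓ
    dsimp only
    split
    · exact zero_le_one
    · exact le_rfl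
  · intro μ ν
    simp [ite_and, Finset.sum_ite_eq']
  · intro α
    exact Matrix.PosSemidef.one
  · simp [Matrix.trace_one]
  · intro μ α k
    dsimp only
    split
    · exact Matrix.PosSemidef.one
    · exact Matrix.PosSemidef.zero
  · intro μ α
    simp [Finset.sum_ite_eq']
  · intro μ α
    have hset : {k : Fin (s+1) | (if k = 0 then (1:Matrix (Fin 1) (Fin 1) ℂ) else 0) ≠ 0} = {0} := by
      ext k
      simp only [Set.mem_setOf_eq, Set.mem_singleton_iff]
      constructor
      · intro h
        by_contra hk
        rw [if_neg hk] at h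
        exact h rfl
      · rintro rfl
        rw [if_pos rfl]
        intro h
        have := congrFun (congrFun h 0) 0
        simp [Matrix.one_apply] at this
    rw [hset, Set.ncard_singleton]
    exact hn
  · intro ν α ℓ
    dsimp only
    split
    · exact Matrix.PosSemidef.one
    · exact Matrix.PosSemidef.zero
  · intro ν α
    simp [Finset.sum_ite_eq']
  · intro ν α
    have hset : {ℓ : Fin (s+1) | (if ℓ = 0 then (1:Matrix (Fin 1) (Fin 1) ℂ) else 0) ≠ 0} = {0} := by
      ext ℓ
      simp only [Set.mem_setOf_eq, Set.mem_singleton_iff]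
      constructor
      · intro h
        by_contra hl
        rw [if_neg hl] at h
        exact h rfl
      · rintro rfl
        rw [if_pos rfl]
        intro h
        have := congrFun (congrFun h 0) 0
        simp [Matrix.one_apply] at this
    rw [hset, Set.ncard_singleton]
    exact hn
  · intro μ ν k ℓ
    by_cases hk : k = 0 <;> by_cases hl : ℓ = 0 <;>
      simp [hk, hl, Matrix.one_kronecker_one, Matrix.kronecker_zero, Matrix.zero_kronecker,
        Matrix.trace_one]

/-- For all `n ≥ 1` and `r ≥ 2`, the infima of `I'` over the
`n`-chotomic quantum correlations satisfy `q_{n,r-1} ≤ 11·q_{n,r}`. -/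
theorem qnr_pred_le_eleven_mul (n r : ℕ) (hn : 1 ≤ n) (hr : 2 ≤ r) :
    qnr n (r - 1) ≤ 11 * qnr n r := by
  obtain ⟨m, rfl⟩ : ∃ m, r = m + 2 := ⟨r - 2, by omega⟩
  have hsub : m + 2 - 1 = m + 1 := rfl
  rw [hsub]
  have hbdd : BddBelow {x | ∃ P, IsNChotomicQC n (m+1) P ∧ ZG P = x} := by
    refine ⟨0, fun x hx => ?_⟩
    obtain ⟨P, hP, rfl⟩ := hx
    exact zg_nonneg hP.1.1
  have hne : {x | ∃ P, IsNChotomicQC n (m+2) P ∧ ZG P = x}.Nonempty := by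
    obtain ⟨P, hP⟩ := exists_QC n hn (m+2) (by omega)
    exact ⟨ZG P, P, hP, rfl⟩
  have key : ∀ x ∈ {x | ∃ P, IsNChotomicQC n (m+2) P ∧ ZG P = x},
      qnr n (m+1) / 11 ≤ x := by
    rintro x ⟨P, hP, rfl⟩
    have h1 : qnr n (m+1) ≤ ZG (mergeLast P) :=
      csInf_le hbdd ⟨mergeLast P, merge_isNChotomicQC hP, rfl⟩
    have h2 := zg_merge_le hP.1.1 (noSignaling_of_QC hP)
    linarith
  have hle : qnr n (m+1) / 11 ≤ qnr n (m+2) := le_csInf hne key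
  linarith
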